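/- For a symmetric positive definite matrix field D : Ω → ℝ^{m×m} that is differentiable, the pointwise inequality −∂_k D : ∂_k(D^{-1}) ≥ (1/m) |∂_k tr(log D)|² holds for each direction k, where ∂_k(D^{-1}) = −D^{-1} (∂_k D) D^{-1}. -/

import Mathlib

/-!
Write `P = D⁻¹` and `M = ∂D`. The derivative of inversion and Jacobi's formula give
`∂(D⁻¹) = -P M P` and `∂ log det D = tr(P M)`, so the claim reads
`tr(P M)² ≤ m tr(P M P M)`.
Factoring `P = Bᵀ B`, both traces are traces of the symmetric matrix `A = B M Bᵀ`:
`tr(P M) = tr A` and `tr(P M P M) = tr(Aᵀ A)`, and `tr(A)² ≤ m tr(Aᵀ A)` is Cauchy–Schwarz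
for the diagonal of `A`.
-/

open Matrix

attribute [local instance] Matrix.frobeniusNormedAddCommGroup Matrix.frobeniusNormedSpace

namespace Matrix

variable {n : Type*} [Fintype n]

theorem trace_adjugate_mul_eq_sum_perm [DecidableEq n] {R : Type*} [CommRing R]
    (A H : Matrix n n R) :
    (A.adjugate * H).trace =
      ∑ σ : Equiv.Perm n, ((Equiv.Perm.sign σ : ℤ) : R) *
        ∑ i, (∏ j ∈ Finset.univ.erase i, A (σ j) j) * H (σ i) i := by
  have hdiag : ∀ i, (A.adjugate * H) i i = (A.updateCol i fun j => H j i).det := by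
    intro i
    rw [← cramer_apply, cramer_eq_adjugate_mulVec]
    simp [mul_apply, mulVec, dotProduct]
  calc (A.adjugate * H).trace = ∑ i, (A.updateCol i fun j => H j i).det := by
        simp [trace, hdiag]
    _ = ∑ i, ∑ σ : Equiv.Perm n, ((Equiv.Perm.sign σ : ℤ) : R) *
          (H (σ i) i * ∏ j ∈ Finset.univ.erase i, A (σ j) j) := by
        refine Finset.sum_congr rfl fun i _ => ?_
        rw [det_apply']
        refine Finset.sum_congr rfl fun σ _ => ?_
        rw [← Finset.mul_prod_erase Finset.univ _ (Finset.mem_univ i), updateCol_self]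
        congr 2
        refine Finset.prod_congr rfl fun j hj => ?_
        rw [updateCol_apply, if_neg (Finset.ne_of_mem_erase hj)]
    _ = _ := by
        rw [Finset.sum_comm]
        simp only [Finset.mul_sum]
        exact Finset.sum_congr rfl fun σ _ => Finset.sum_congr rfl fun i _ => by ring

theorem trace_sq_le_card_mul_trace_transpose_mul_self (A : Matrix n n ℝ) :
    A.trace ^ 2 ≤ Fintype.card n * (Aᵀ * A).trace := by
  have hsum : (Aᵀ * A).trace = ∑ i, ∑ j, A j i ^ 2 := by
    simp [trace, mul_apply, sq]
  calc A.trace ^ 2 ≤ Fintype.card n * ∑ i, A i i ^ 2 :=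
        sq_sum_le_card_mul_sum_sq (s := Finset.univ) (f := fun i => A i i)
    _ ≤ Fintype.card n * (Aᵀ * A).trace := by
        rw [hsum]
        gcongr with i
        exact Finset.single_le_sum (f := fun j => A j i ^ 2) (fun j _ => sq_nonneg _)
          (Finset.mem_univ i)

open scoped MatrixOrder in
theorem PosSemidef.trace_mul_sq_div_card_le [DecidableEq n] {P M : Matrix n n ℝ}
    (hP : P.PosSemidef) (hM : M.IsSymm) :
    (P * M).trace ^ 2 / Fintype.card n ≤ (P * M * P * M).trace := by
  obtain ⟨B, rfl⟩ := CStarAlgebra.nonneg_iff_eq_star_mul_self.mp hP.nonneg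
  rw [star_eq_conjTranspose, conjTranspose_eq_transpose_of_trivial]
  set A := B * M * Bᵀ
  have hA : Aᵀ = A := by simp only [A, transpose_mul, transpose_transpose, hM.eq, mul_assoc]
  have htrace : (Bᵀ * B * M).trace = A.trace := by
    rw [mul_assoc, trace_mul_comm]
  have htrace_sq : (Bᵀ * B * M * (Bᵀ * B) * M).trace = (Aᵀ * A).trace := by
    simp only [mul_assoc]
    rw [trace_mul_comm Bᵀ, hA]
    simp only [A, mul_assoc]
  rw [htrace, htrace_sq]
  refine div_le_of_le_mul₀ (by positivity) ?_ ?_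
  · simpa using (posSemidef_conjTranspose_mul_self A).trace_nonneg
  · simpa [mul_comm] using trace_sq_le_card_mul_trace_transpose_mul_self A

section Calculus

attribute [local instance] frobeniusNormedRing frobeniusNormedAlgebra

variable {𝕜 : Type*} [RCLike 𝕜] {D : 𝕜 → Matrix n n 𝕜}
  {M : Matrix n n 𝕜} {t : 𝕜}

theorem _root_.HasDerivAt.matrix_apply (h : HasDerivAt D M t) (i j : n) :
    HasDerivAt (fun s => D s i j) (M i j) t :=
  (LinearMap.toContinuousLinearMap (entryLinearMap 𝕜 𝕜 i j)).hasFDerivAt.comp_hasDerivAt t h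

theorem _root_.HasDerivAt.matrix_transpose (h : HasDerivAt D M t) :
    HasDerivAt (fun s => (D s)ᵀ) Mᵀ t :=
  (LinearMap.toContinuousLinearMap
    (transposeLinearEquiv n n 𝕜 𝕜).toLinearMap).hasFDerivAt.comp_hasDerivAt t h

theorem _root_.HasDerivAt.isSymm (h : HasDerivAt D M t) (hD : ∀ s, (D s).IsSymm) : M.IsSymm := by
  have hT := h.matrix_transpose
  simp only [fun s => (hD s).eq] at hT
  exact hT.unique h

variable [DecidableEq n]

theorem _root_.HasDerivAt.matrix_det (h : HasDerivAt D M t) :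
    HasDerivAt (fun s => (D s).det) ((D t).adjugate * M).trace t := by
  simp only [det_apply', trace_adjugate_mul_eq_sum_perm]
  refine HasDerivAt.fun_sum fun σ _ => ?_
  simpa [smul_eq_mul] using
    (HasDerivAt.fun_finsetProd fun i _ => h.matrix_apply (σ i) i).const_mul _

theorem _root_.HasDerivAt.matrix_inv (h : HasDerivAt D M t) (hD : IsUnit (D t)) :
    HasDerivAt (fun s => (D s)⁻¹) (-((D t)⁻¹ * M * (D t)⁻¹)) t := by
  have hinv := (hasFDerivAt_ringInverse (𝕜 := 𝕜) hD.unit).comp_hasDerivAt t h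
  simp only [Function.comp_def, ← Ring.inverse_unit hD.unit, IsUnit.unit_spec,
    ← nonsing_inv_eq_ringInverse] at hinv
  exact hinv

end Calculus

theorem _root_.HasDerivAt.log_det [DecidableEq n] {D : ℝ → Matrix n n ℝ} {M : Matrix n n ℝ}
    {t : ℝ} (h : HasDerivAt D M t) (hdet : (D t).det ≠ 0) :
    HasDerivAt (fun s => Real.log (D s).det) ((D t)⁻¹ * M).trace t := by
  rw [inv_def, Ring.inverse_eq_inv', smul_mul, trace_smul, smul_eq_mul, ← div_eq_inv_mul]
  exact h.matrix_det.log hdet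

end Matrix

theorem matrix_log_gradient_inequality_general {m : ℕ}
    (D : ℝ → Matrix (Fin m) (Fin m) ℝ) (hD : Differentiable ℝ D)
    (hpd : ∀ t, (D t).PosDef) :
    ∀ t : ℝ,
      deriv (fun s => ((D s)⁻¹ : Matrix (Fin m) (Fin m) ℝ)) t =
        -((D t)⁻¹ * deriv D t * (D t)⁻¹) ∧
      deriv (fun s => Real.log (D s).det) t = ((D t)⁻¹ * deriv D t).trace ∧
      (1 / (m : ℝ)) * (deriv (fun s => Real.log (D s).det) t) ^ 2 ≤
        -(deriv D t * (deriv (fun s => ((D s)⁻¹ : Matrix (Fin m) (Fin m) ℝ)) t)ᵀ).trace := by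
  intro t
  -- `hD` refers to the Frobenius norm, the statement's `deriv` to the product topology; the
  -- ascriptions restate our lemmas with the statement's instances, which agree definitionally.
  have hM : HasDerivAt D (deriv D t) t := (hD t).hasDerivAt
  have hinv : deriv (fun s => (D s)⁻¹) t = -((D t)⁻¹ * deriv D t * (D t)⁻¹) :=
    (hM.matrix_inv (hpd t).isUnit).deriv
  have hlog := (hM.log_det (hpd t).det_pos.ne').deriv
  have hMsym := hM.isSymm fun s => isHermitian_iff_isSymm.mp (hpd s).isHermitian
  have hPsym : ((D t)⁻¹).IsSymm := isHermitian_iff_isSymm.mp (hpd t).inv.isHermitian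
  refine ⟨hinv, hlog, ?_⟩
  have key := (hpd t).inv.posSemidef.trace_mul_sq_div_card_le hMsym
  rw [hinv, hlog, transpose_neg, mul_neg, trace_neg, neg_neg, transpose_mul,
    transpose_mul, hPsym.eq, hMsym.eq, one_div_mul_eq_div, trace_mul_comm (deriv D t)]
  simpa [mul_assoc] using key

/-- For a differentiable symmetric positive definite matrix field D along one direction,
the pointwise inequality −∂D : ∂(D⁻¹) ≥ (1/m) |∂ tr(log D)|² holds, where
∂(D⁻¹) = −D⁻¹ (∂D) D⁻¹, A : B = tr(A Bᵀ) is the Frobenius product and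
tr(log D) = log det D, so ∂ tr(log D) = tr(D⁻¹ ∂D). -/
theorem matrix_log_gradient_inequality {m : ℕ} (hm : 0 < m)
    (D : ℝ → Matrix (Fin m) (Fin m) ℝ) (hD : Differentiable ℝ D)
    (hsym : ∀ t, (D t).IsSymm) (hpd : ∀ t, (D t).PosDef) :
    ∀ t : ℝ,
      deriv (fun s => ((D s)⁻¹ : Matrix (Fin m) (Fin m) ℝ)) t =
        -((D t)⁻¹ * deriv D t * (D t)⁻¹) ∧
      deriv (fun s => Real.log (D s).det) t = ((D t)⁻¹ * deriv D t).trace ∧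
      (1 / (m : ℝ)) * (deriv (fun s => Real.log (D s).det) t) ^ 2 ≤
        -(deriv D t * (deriv (fun s => ((D s)⁻¹ : Matrix (Fin m) (Fin m) ℝ)) t)ᵀ).trace :=
  matrix_log_gradient_inequality_general D hD hpd
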